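/- Let φ be a QLTLf formula in prenex normal form, i.e., φ = Q₁X₁. Q₂X₂. … QₘXₘ. ψ with each Qᵢ ∈ {∃, ∀} and ψ an (quantifier-free) LTLf formula. If there exists an NFA recognizing exactly the models of ψ (i.e., an NFA A with L(A) = { t | t ⊨ ψ }), then there exists a DFA A_φ with L(A_φ) = { t | t ⊨ φ }. -/

import Mathlib

/-! ## Automata -/

/-- A deterministic finite automaton (DFA) over alphabet `α` with states `S`:
a designated initial state, a total transition function, and a set of accepting states. -/
structure DFA' (α : Type*) (S : Type*) where
  start : S
  step : S → α → S
  accept : Set S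

namespace DFA'

variable {α S : Type*}

/-- The state reached from `s` after reading the word `w`. -/
def evalFrom (M : DFA' α S) (s : S) (w : List α) : S :=
  w.foldl M.step s

/-- A DFA accepts a finite word iff its unique run from the initial state ends in an
accepting state. -/
def Accepts (M : DFA' α S) (w : List α) : Prop :=
  M.evalFrom M.start w ∈ M.accept

/-- The complement of a DFA, obtained by complementing its set of accepting states. -/
def compl (M : DFA' α S) : DFA' α S :=
  { M with accept := M.acceptᶜ }

/-- The synchronous product of two DFAs over the same alphabet. -/
def prod {S₁ S₂ : Type*} (M₁ : DFA' α S₁) (M₂ : DFA' α S₂) : DFA' α (S₁ × S₂) where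
  start := (M₁.start, M₂.start)
  step := fun p a => (M₁.step p.1 a, M₂.step p.2 a)
  accept := {p | p.1 ∈ M₁.accept ∧ p.2 ∈ M₂.accept}

end DFA'

/-- A nondeterministic finite automaton (NFA) over alphabet `α` with states `S`:
a designated initial state, a transition function into sets of states, and a set of
accepting states. -/
structure NFA' (α : Type*) (S : Type*) where
  start : S
  step : S → α → Set S
  accept : Set S

namespace NFA'

variable {α S : Type*}

/-- One step of the subset construction. -/
def stepSet (M : NFA' α S) (T : Set S) (a : α) : Set S :=
  ⋃ s ∈ T, M.step s a

/-- The set of states reachable from a state in `T` after reading the word `w`. -/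
def evalFrom (M : NFA' α S) (T : Set S) (w : List α) : Set S :=
  w.foldl M.stepSet T

/-- An NFA accepts a finite word iff some run from the initial state on that word
ends in an accepting state. -/
def Accepts (M : NFA' α S) (w : List α) : Prop :=
  ∃ s ∈ M.evalFrom {M.start} w, s ∈ M.accept

/-- The determinization `D(M)` of an NFA `M` by the subset construction. -/
def det (M : NFA' α S) : DFA' α (Set S) where
  start := {M.start}
  step := M.stepSet
  accept := {T | ∃ s ∈ T, s ∈ M.accept}

end NFA'

/-- A DFA viewed as an NFA. -/
def DFA'.toNFA' {α S : Type*} (M : DFA' α S) : NFA' α S where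
  start := M.start
  step := fun s a => {M.step s a}
  accept := M.accept

/-! ## Traces -/

/-- Two finite traces over `2^P` are equivalent up to the variables in `V`
(written `t' ~_{-V} t` in the paper): they have the same length and at every position
they contain exactly the same variables of `P \ V`. -/
def EquivUpTo {P : Type*} (V : Set P) (t t' : List (Set P)) : Prop :=
  List.Forall₂ (fun a b => a \ V = b \ V) t t'

/-- The existentially abstracted NFA `N_{∃V}`: same states, initial and accepting states,
and `δ'(s, a) = { s' | ∃ a' with a ~_{-V} a' and s' ∈ δ(s, a') }`. -/
def NFA'.abstract {P S : Type*} (M : NFA' (Set P) S) (V : Set P) : NFA' (Set P) S :=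
  { M with step := fun s a => {s' | ∃ a' : Set P, a \ V = a' \ V ∧ s' ∈ M.step s a'} }

/-- The belief-state DFA `G^rel_A` of a DFA `A` over `2^{X ∪ Y}` with unreliable input
variables `Xunr ⊆ X`: states are sets of states of `A`, the initial state is `{s₀}`,
`∂(B, a) = { s' | ∃ s ∈ B, ∃ a' with a ~_{-Xunr} a' and δ(s, a') = s' }`, and a belief
state `B` is accepting iff `B ⊆ F`. -/
def DFA'.belief {X Y S : Type*} (A : DFA' (Set (X ⊕ Y)) S) (Xunr : Set X) :
    DFA' (Set (X ⊕ Y)) (Set S) where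
  start := {A.start}
  step := fun B a => {s' | ∃ s ∈ B, ∃ a' : Set (X ⊕ Y),
    a \ (Sum.inl '' Xunr) = a' \ (Sum.inl '' Xunr) ∧ A.step s a' = s'}
  accept := {B | B ⊆ A.accept}

/-! ## LTLf and QLTLf -/

/-- LTLf formulas over propositional variables `P`. -/
inductive LTLf (P : Type*) where
  | atom : P → LTLf P
  | not : LTLf P → LTLf P
  | and : LTLf P → LTLf P → LTLf P
  | next : LTLf P → LTLf P
  | until_ : LTLf P → LTLf P → LTLf P

/-- Satisfaction `t, i ⊨ φ` of an LTLf formula at position `i` (0-indexed) of a finite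
trace `t`. -/
def LTLf.Sat {P : Type*} (t : List (Set P)) : LTLf P → ℕ → Prop
  | .atom a, i => ∃ h : i < t.length, a ∈ t.get ⟨i, h⟩
  | .not φ, i => ¬ LTLf.Sat t φ i
  | .and φ ψ, i => LTLf.Sat t φ i ∧ LTLf.Sat t ψ i
  | .next φ, i => i + 1 < t.length ∧ LTLf.Sat t φ (i + 1)
  | .until_ φ ψ, i => ∃ j, i ≤ j ∧ j < t.length ∧ LTLf.Sat t ψ j ∧
      ∀ k, i ≤ k → k < j → LTLf.Sat t φ k

/-- QLTLf formulas over propositional variables `P`: LTLf extended with second-order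
existential quantification over propositional variables. -/
inductive QLTLf (P : Type*) where
  | atom : P → QLTLf P
  | not : QLTLf P → QLTLf P
  | and : QLTLf P → QLTLf P → QLTLf P
  | next : QLTLf P → QLTLf P
  | until_ : QLTLf P → QLTLf P → QLTLf P
  | ex : P → QLTLf P → QLTLf P

/-- Satisfaction `t, i ⊨ φ` of a QLTLf formula at position `i` (0-indexed) of a finite
trace `t`; `t, i ⊨ ∃X. φ` iff there is a trace `t'` with `t' ~_{-{X}} t` and `t', i ⊨ φ`. -/
def QLTLf.Sat {P : Type*} : List (Set P) → QLTLf P → ℕ → Prop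
  | t, .atom a, i => ∃ h : i < t.length, a ∈ t.get ⟨i, h⟩
  | t, .not φ, i => ¬ QLTLf.Sat t φ i
  | t, .and φ ψ, i => QLTLf.Sat t φ i ∧ QLTLf.Sat t ψ i
  | t, .next φ, i => i + 1 < t.length ∧ QLTLf.Sat t φ (i + 1)
  | t, .until_ φ ψ, i => ∃ j, i ≤ j ∧ j < t.length ∧ QLTLf.Sat t ψ j ∧
      ∀ k, i ≤ k → k < j → QLTLf.Sat t φ k
  | t, .ex p φ, i => ∃ t', EquivUpTo {p} t' t ∧ QLTLf.Sat t' φ i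

/-- Universal second-order quantification `∀X. φ := ¬∃X. ¬φ`. -/
def QLTLf.all {P : Type*} (p : P) (φ : QLTLf P) : QLTLf P :=
  .not (.ex p (.not φ))

/-- The embedding of (quantifier-free) LTLf formulas into QLTLf. -/
def LTLf.toQ {P : Type*} : LTLf P → QLTLf P
  | .atom a => .atom a
  | .not φ => .not φ.toQ
  | .and φ ψ => .and φ.toQ ψ.toQ
  | .next φ => .next φ.toQ
  | .until_ φ ψ => .until_ φ.toQ ψ.toQ

/-! ## Strategies, plays and synthesis -/

section Synthesis

variable {X Y : Type*}

/-- The letter `X ∪ Y ∈ 2^{X ∪ Y}` combining an input letter `A ∈ 2^X` and an output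
letter `B ∈ 2^Y`. -/
def combine (A : Set X) (B : Set Y) : Set (X ⊕ Y) :=
  Sum.inl '' A ∪ Sum.inr '' B

/-- The finite trace `((X₀ ∪ Y₀), …, (X_k ∪ Y_k))` with `Y_i = σ(X₀, …, X_{i-1})`
produced by the strategy `σ` against the infinite input sequence `env`. -/
def playTrace (σ : List (Set X) → Set Y) (env : ℕ → Set X) (k : ℕ) :
    List (Set (X ⊕ Y)) :=
  (List.range (k + 1)).map fun i => combine (env i) (σ ((List.range i).map env))

/-- The strategy `σ` is winning for the agent in the DFA game on `G`: for every infinite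
input sequence there is a `k` such that the run of `G` on the induced finite trace ends
in an accepting state. -/
def Winning {S : Type*} (G : DFA' (Set (X ⊕ Y)) S) (σ : List (Set X) → Set Y) : Prop :=
  ∀ env : ℕ → Set X, ∃ k : ℕ, G.Accepts (playTrace σ env k)

/-- The strategy `σ` realizes the LTLf formula `φ` in standard LTLf synthesis. -/
def Realizes (σ : List (Set X) → Set Y) (φ : LTLf (X ⊕ Y)) : Prop :=
  ∀ env : ℕ → Set X, ∃ k : ℕ, LTLf.Sat (playTrace σ env k) φ 0

/-- The strategy `σ` realizes QLTLf synthesis for the QLTLf formula `ψ`. -/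
def RealizesQ (σ : List (Set X) → Set Y) (ψ : QLTLf (X ⊕ Y)) : Prop :=
  ∀ env : ℕ → Set X, ∃ k : ℕ, QLTLf.Sat (playTrace σ env k) ψ 0

/-- The strategy `σ` solves LTLf synthesis under unreliable input for main specification
`φm`, backup specification `φb`, and unreliable input variables `Xunr`: for every
infinite input sequence there is a `k` such that the induced finite trace `t` satisfies
`φm` and every trace `t'` with `t' ~_{-Xunr} t` satisfies `φb`. -/
def SolvesUnreliable (σ : List (Set X) → Set Y) (φm φb : LTLf (X ⊕ Y))
    (Xunr : Set X) : Prop :=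
  ∀ env : ℕ → Set X, ∃ k : ℕ,
    LTLf.Sat (playTrace σ env k) φm 0 ∧
    ∀ t', EquivUpTo (Sum.inl '' Xunr) t' (playTrace σ env k) → LTLf.Sat t' φb 0

end Synthesis
/-- A quantifier prefix applied to a matrix: `Q₁X₁. … QₘXₘ. ψ`, where `true` codes `∃`
and `false` codes `∀`. -/
def QLTLf.prenex {P : Type*} (qs : List (Bool × P)) (ψ : QLTLf P) : QLTLf P :=
  qs.foldr (fun q acc => if q.1 then QLTLf.ex q.2 acc else QLTLf.all q.2 acc) ψ


/-! Models of formulas recognized by NFAs are closed under negation (determinize, then swap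
accepting and rejecting subsets) and under `∃X` (let the automaton guess the value of `X` at
every letter), so an NFA for the matrix yields, quantifier by quantifier from the inside out, an
NFA for the prenex formula, and determinizing it gives the DFA. Guessing never changes the length
of a trace, so the empty trace, where the specifications say nothing, never has to be accepted. -/

namespace NFA'

variable {α S : Type*}

theorem stepSet_singleton (M : NFA' α S) (s : S) (a : α) : M.stepSet {s} a = M.step s a := by
  simp [stepSet]

theorem evalFrom_cons (M : NFA' α S) (T : Set S) (a : α) (w : List α) :
    M.evalFrom T (a :: w) = M.evalFrom (M.stepSet T a) w := rfl

theorem stepSet_iUnion {ι : Sort*} (M : NFA' α S) (T : ι → Set S) (a : α) :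
    M.stepSet (⋃ i, T i) a = ⋃ i, M.stepSet (T i) a := by
  simp only [stepSet, Set.biUnion_iUnion]

theorem evalFrom_iUnion {ι : Sort*} (M : NFA' α S) (T : ι → Set S) (w : List α) :
    M.evalFrom (⋃ i, T i) w = ⋃ i, M.evalFrom (T i) w := by
  induction w generalizing T with
  | nil => rfl
  | cons a w ih => rw [evalFrom_cons, stepSet_iUnion, ih]; rfl

theorem det_accepts (M : NFA' α S) (w : List α) : M.det.Accepts w ↔ M.Accepts w := Iff.rfl

theorem abstract_stepSet {P : Type*} (M : NFA' (Set P) S) (V : Set P) (T : Set S) (a : Set P) :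
    (M.abstract V).stepSet T a = ⋃ (a' : Set P) (_ : a' \ V = a \ V), M.stepSet T a' := by
  ext s
  simp only [stepSet, abstract, Set.mem_iUnion, exists_prop]
  constructor
  · rintro ⟨s₀, hs₀, a', ha', hs⟩
    exact ⟨a', ha'.symm, s₀, hs₀, hs⟩
  · rintro ⟨a', ha', s₀, hs₀, hs⟩
    exact ⟨s₀, hs₀, a', ha'.symm, hs⟩

theorem mem_abstract_evalFrom {P : Type*} (M : NFA' (Set P) S) (V : Set P) {T : Set S}
    {s : S} {t : List (Set P)} :
    s ∈ (M.abstract V).evalFrom T t ↔ ∃ t', EquivUpTo V t' t ∧ s ∈ M.evalFrom T t' := by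
  induction t generalizing T with
  | nil => simp [EquivUpTo, evalFrom]
  | cons a t ih =>
    simp only [evalFrom_cons, ih, abstract_stepSet, evalFrom_iUnion, Set.mem_iUnion, EquivUpTo,
      List.forall₂_cons_right_iff]
    constructor
    · rintro ⟨a', ha', t', ht', hs⟩
      exact ⟨a' :: t', ⟨a', t', ha', ht', rfl⟩, hs⟩
    · rintro ⟨_, ⟨a', t', ha', ht', rfl⟩, hs⟩
      exact ⟨a', ha', t', ht', hs⟩

theorem abstract_accepts {P : Type*} (M : NFA' (Set P) S) (V : Set P) (t : List (Set P)) :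
    (M.abstract V).Accepts t ↔ ∃ t', EquivUpTo V t' t ∧ M.Accepts t' := by
  simp only [Accepts, mem_abstract_evalFrom]
  constructor
  · rintro ⟨s, ⟨t', ht', hs⟩, hacc⟩
    exact ⟨t', ht', s, hs, hacc⟩
  · rintro ⟨t', ht', s, hs, hacc⟩
    exact ⟨s, ⟨t', ht', hs⟩, hacc⟩

end NFA'

namespace DFA'

variable {α S : Type*}

theorem compl_accepts (M : DFA' α S) (w : List α) :
    M.compl.Accepts w ↔ ¬ M.Accepts w := Iff.rfl

theorem toNFA'_evalFrom (M : DFA' α S) (s : S) (w : List α) :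
    M.toNFA'.evalFrom {s} w = {M.evalFrom s w} := by
  induction w generalizing s with
  | nil => rfl
  | cons a w ih =>
    rw [NFA'.evalFrom_cons, NFA'.stepSet_singleton]
    exact ih _

theorem toNFA'_accepts (M : DFA' α S) (w : List α) :
    M.toNFA'.Accepts w ↔ M.Accepts w := by
  rw [NFA'.Accepts, show M.toNFA'.start = M.start from rfl, M.toNFA'_evalFrom]
  simp only [Set.mem_singleton_iff, exists_eq_left]
  rfl

end DFA'

theorem EquivUpTo.ne_nil {P : Type*} {V : Set P} {t t' : List (Set P)} (h : EquivUpTo V t' t)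
    (ht : t ≠ []) : t' ≠ [] := by
  rintro rfl
  cases h
  exact ht rfl

def QLTLf.NFARecognizable {P : Type*} (φ : QLTLf P) : Prop :=
  ∃ (S : Type) (A : NFA' (Set P) S),
    ∀ t : List (Set P), t ≠ [] → (A.Accepts t ↔ QLTLf.Sat t φ 0)

namespace QLTLf.NFARecognizable

variable {P : Type*} {φ : QLTLf P}

theorem not (hφ : φ.NFARecognizable) : (QLTLf.not φ).NFARecognizable := by
  obtain ⟨S, A, hA⟩ := hφ
  refine ⟨Set S, A.det.compl.toNFA', fun t ht => ?_⟩
  rw [DFA'.toNFA'_accepts, DFA'.compl_accepts, NFA'.det_accepts, hA t ht]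
  rfl

theorem ex (p : P) (hφ : φ.NFARecognizable) : (QLTLf.ex p φ).NFARecognizable := by
  obtain ⟨S, A, hA⟩ := hφ
  refine ⟨S, A.abstract {p}, fun t ht => (A.abstract_accepts {p} t).trans ?_⟩
  exact exists_congr fun t' => and_congr_right fun h => hA t' (h.ne_nil ht)

theorem all (p : P) (hφ : φ.NFARecognizable) : (QLTLf.all p φ).NFARecognizable :=
  (hφ.not.ex p).not

theorem prenex (qs : List (Bool × P)) (hφ : φ.NFARecognizable) :
    (QLTLf.prenex qs φ).NFARecognizable := by
  induction qs with
  | nil => exact hφ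
  | cons q qs ih =>
    obtain ⟨_ | _, p⟩ := q
    · exact ih.all p
    · exact ih.ex p

end QLTLf.NFARecognizable

/-- Let `φ = Q₁X₁. … QₘXₘ. ψ` be a QLTLf formula in prenex normal form
with quantifier-free (LTLf) matrix `ψ`. If there exists an NFA recognizing exactly the
models of `ψ`, then there exists a DFA `A_φ` with `L(A_φ) = { t | t ⊨ φ }`. -/
theorem prenex_qltlf_dfa_exists {P : Type*}
    (ψ : LTLf P) (qs : List (Bool × P))
    (h : ∃ (S : Type) (A : NFA' (Set P) S),
      ∀ t : List (Set P), t ≠ [] → (A.Accepts t ↔ QLTLf.Sat t ψ.toQ 0)) :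
    ∃ (S' : Type) (D : DFA' (Set P) S'),
      ∀ t : List (Set P), t ≠ [] →
        (D.Accepts t ↔ QLTLf.Sat t (QLTLf.prenex qs ψ.toQ) 0) := by
  obtain ⟨S, A, hA⟩ := QLTLf.NFARecognizable.prenex qs h
  exact ⟨Set S, A.det, fun t ht => (A.det_accepts t).trans (hA t ht)⟩
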